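/- arXiv:1709.01337 — 3 statements merged into one kernel-verified Lean document; each statement's English description precedes it below -/
import Mathlib

section
/- For every integer n ≥ 1 and every sample y = (y_1,…,y_n) ∈ ℝ^n, the VaR backtest statistic satisfies T_n = inf{α ∈ (0,1) : V̂aR^α_n(y) ≤ 0}, where the convention inf ∅ := 1 is used. In other words, the average exception rate (1/n)∑_{i=1}^n 1{y_i < 0} equals the smallest confidence level α at which the empirical Value-at-Risk of the sample is nonpositive. -/
open Finset

/-- The nondecreasing rearrangement (order statistics) of a sample, 0-indexed:
`orderStat y k` is the `(k+1)`-th smallest entry of `y`. -/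
noncomputable def orderStat {n : ℕ} (y : Fin n → ℝ) : Fin n → ℝ :=
  y ∘ Tuple.sort y

/-- Empirical Value-at-Risk at level `α`: `-y_(⌊nα⌋+1)` (1-based order statistics). -/
noncomputable def empVaR {n : ℕ} (α : ℝ) (y : Fin n → ℝ) : ℝ :=
  if h : ⌊(n : ℝ) * α⌋₊ < n then -orderStat y ⟨⌊(n : ℝ) * α⌋₊, h⟩ else 0

/-- Empirical Expected Shortfall at level `α`. -/
noncomputable def empES {n : ℕ} (α : ℝ) (y : Fin n → ℝ) : ℝ :=
  if h : ⌊(n : ℝ) * α⌋₊ < n then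
    -((∑ i, if y i ≤ orderStat y ⟨⌊(n : ℝ) * α⌋₊, h⟩ then y i else 0) /
      (∑ i, if y i ≤ orderStat y ⟨⌊(n : ℝ) * α⌋₊, h⟩ then (1 : ℝ) else 0))
  else 0

open scoped Classical in
/-- The number of negative order statistics equals the number of negative sample points. -/
lemma card_orderStat_neg {n : ℕ} (y : Fin n → ℝ) :
    (univ.filter (fun j => orderStat y j < 0)).card
      = (univ.filter (fun i => y i < 0)).card := by
  apply Finset.card_bij (fun j _ => Tuple.sort y j)
  · intro a ha; simp only [mem_filter, mem_univ, true_and] at ha ⊢; exact ha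
  · intro a _ b _ h; exact (Tuple.sort y).injective h
  · intro b hb
    refine ⟨(Tuple.sort y).symm b, ?_, by simp⟩
    simp only [mem_filter, mem_univ, true_and, orderStat, Function.comp_apply,
      Equiv.apply_symm_apply] at hb ⊢
    exact Finset.mem_filter.mpr ⟨mem_univ _, by simpa using hb⟩

open scoped Classical in
/-- The `j`-th order statistic is negative iff `j` is less than the number of negative
sample points. -/
lemma orderStat_neg_iff {n : ℕ} (y : Fin n → ℝ) (j : Fin n) :
    orderStat y j < 0 ↔ (j : ℕ) < (univ.filter (fun i => y i < 0)).card := by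
  rw [← card_orderStat_neg]
  set f := orderStat y with hf
  have mono : Monotone f := Tuple.monotone_sort y
  set A := univ.filter (fun j => f j < 0) with hA
  constructor
  · intro h
    have hsub : Finset.Iic j ⊆ A := by
      intro i hi
      simp only [Finset.mem_Iic] at hi
      simp only [hA, mem_filter, mem_univ, true_and]
      exact lt_of_le_of_lt (mono hi) h
    calc (j : ℕ) < (Finset.Iic j).card := by rw [Fin.card_Iic]; omega
      _ ≤ A.card := Finset.card_le_card hsub
  · intro h
    by_contra hc
    push_neg at hc
    have hsub : A ⊆ Finset.Iio j := by
      intro i hi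
      simp only [hA, mem_filter, mem_univ, true_and] at hi
      simp only [Finset.mem_Iio]
      by_contra hij
      exact absurd (lt_of_le_of_lt (hc.trans (mono (not_lt.mp hij))) hi) (lt_irrefl _)
    have := Finset.card_le_card hsub
    rw [Fin.card_Iio] at this
    omega

open scoped Classical in
/-- The VaR backtest statistic `T_n` equals the smallest confidence level `α ∈ (0,1)`
at which the empirical Value-at-Risk of the sample is nonpositive (with `inf ∅ := 1`). -/
theorem varBacktest_eq_inf (n : ℕ) (hn : 1 ≤ n) (y : Fin n → ℝ) :
    (1 / (n : ℝ)) * ∑ i, (if y i < 0 then (1 : ℝ) else 0) =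
      if {α : ℝ | α ∈ Set.Ioo (0 : ℝ) 1 ∧ empVaR α y ≤ 0}.Nonempty then
        sInf {α : ℝ | α ∈ Set.Ioo (0 : ℝ) 1 ∧ empVaR α y ≤ 0}
      else 1 := by
  have hn0 : (0 : ℝ) < n := by exact_mod_cast hn
  set k := (univ.filter (fun i => y i < 0)).card with hk
  have hkn : k ≤ n := by
    calc k ≤ (univ : Finset (Fin n)).card := Finset.card_filter_le _ _
      _ = n := by simp
  have hsum : ∑ i, (if y i < 0 then (1 : ℝ) else 0) = (k : ℝ) := by
    rw [Finset.sum_boole]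
  have hseq : {α : ℝ | α ∈ Set.Ioo (0 : ℝ) 1 ∧ empVaR α y ≤ 0}
      = Set.Ioo (0 : ℝ) 1 ∩ Set.Ici ((k : ℝ) / n) := by
    ext α
    simp only [Set.mem_setOf_eq, Set.mem_inter_iff, Set.mem_Ici, and_congr_right_iff]
    intro hα
    obtain ⟨hα0, hα1⟩ := hα
    have hnna : (0 : ℝ) ≤ (n : ℝ) * α := by positivity
    have hlt : ⌊(n : ℝ) * α⌋₊ < n := by
      rw [Nat.floor_lt hnna]
      calc (n : ℝ) * α < n * 1 := by nlinarith
        _ = n := mul_one _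
    rw [empVaR, dif_pos hlt, neg_nonpos, ← not_lt, orderStat_neg_iff, ← hk]
    simp only [not_lt]
    rw [Nat.le_floor_iff hnna, div_le_iff₀ hn0, mul_comm]
  rw [hseq, hsum]
  rcases eq_or_lt_of_le hkn with hkeq | hklt
  · -- `k = n` : the set is empty, both sides equal `1`
    have hempty : ¬ (Set.Ioo (0 : ℝ) 1 ∩ Set.Ici ((k : ℝ) / n)).Nonempty := by
      rintro ⟨α, ⟨⟨_, hα1⟩, hα2⟩⟩
      rw [hkeq, div_self hn0.ne'] at hα2
      exact absurd hα1 (not_lt.mpr hα2)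
    rw [if_neg hempty, hkeq]
    field_simp
  · -- `k < n`
    have hdiv1 : (k : ℝ) / n < 1 := by
      rw [div_lt_one hn0]; exact_mod_cast hklt
    have hdiv0 : (0 : ℝ) ≤ (k : ℝ) / n := by positivity
    rcases Nat.eq_zero_or_pos k with hk0 | hkpos
    · have : Set.Ioo (0 : ℝ) 1 ∩ Set.Ici ((k : ℝ) / n) = Set.Ioo (0 : ℝ) 1 := by
        rw [hk0]; simp only [Nat.cast_zero, zero_div]
        ext α; simp only [Set.mem_inter_iff, Set.mem_Ici, Set.mem_Ioo, and_iff_left_iff_imp]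
        exact fun h => le_of_lt h.1
      rw [this, if_pos ⟨1/2, by norm_num⟩, csInf_Ioo (by norm_num), hk0]
      simp
    · have hdivpos : (0 : ℝ) < (k : ℝ) / n := by positivity
      have : Set.Ioo (0 : ℝ) 1 ∩ Set.Ici ((k : ℝ) / n) = Set.Ico ((k : ℝ) / n) 1 := by
        ext α
        simp only [Set.mem_inter_iff, Set.mem_Ici, Set.mem_Ioo, Set.mem_Ico]
        constructor
        · rintro ⟨⟨_, h1⟩, h2⟩; exact ⟨h2, h1⟩
        · rintro ⟨h1, h2⟩; exact ⟨⟨lt_of_lt_of_le hdivpos h1, h2⟩, h1⟩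
      rw [this, if_pos ⟨(k : ℝ) / n, by exact ⟨le_refl _, hdiv1⟩⟩, csInf_Ico hdiv1]
      field_simp
end

section
/- For every integer n ≥ 1 and every sample y = (y_1,…,y_n) ∈ ℝ^n with pairwise distinct entries, the ES backtest statistic satisfies G_n = inf{α ∈ (0,1) : ÊS^α_n(y) ≤ 0}, where the convention inf ∅ := 1 is used. In other words, (1/n) times the number of indices k ∈ {1,…,n} for which the sum of the k smallest sample values is negative equals the smallest confidence level α at which the empirical Expected Shortfall of the sample is nonpositive. -/
open Finset

lemma aux_down {n : ℕ} {a : Fin n → ℝ} (hmono : Monotone a) {j k : Fin n} (hjk : j ≤ k)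
    (hk : ∑ i ∈ Finset.Iic k, a i < 0) : ∑ i ∈ Finset.Iic j, a i < 0 := by
  by_contra hj
  push_neg at hj
  have hsub : Finset.Iic j ⊆ Finset.Iic k := Finset.Iic_subset_Iic.2 hjk
  have hsplit := Finset.sum_sdiff (f := a) hsub
  by_cases hpos : ∀ i ∈ Finset.Iic k \ Finset.Iic j, 0 ≤ a i
  · have : 0 ≤ ∑ i ∈ Finset.Iic k \ Finset.Iic j, a i := Finset.sum_nonneg hpos
    linarith
  · push_neg at hpos
    obtain ⟨i, hi, hai⟩ := hpos
    have hji : j < i := by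
      simp only [Finset.mem_sdiff, Finset.mem_Iic] at hi
      exact lt_of_not_ge hi.2
    have hneg : ∑ i' ∈ Finset.Iic j, a i' < ∑ _i' ∈ Finset.Iic j, (0 : ℝ) := by
      apply Finset.sum_lt_sum_of_nonempty ⟨j, Finset.mem_Iic.2 le_rfl⟩
      intro i' hi'
      exact lt_of_le_of_lt (hmono ((Finset.mem_Iic.1 hi').trans hji.le)) hai
    simp only [Finset.sum_const_zero] at hneg
    linarith

open scoped Classical in
/-- membership in a down-closed subset of `Fin n` iff index below the card -/
lemma aux_card {n : ℕ} {a : Fin n → ℝ} (hmono : Monotone a) (k : Fin n) :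
    (∑ i ∈ Finset.Iic k, a i < 0) ↔
      (k : ℕ) < (Finset.univ.filter fun j : Fin n => ∑ i ∈ Finset.Iic j, a i < 0).card := by
  set T := Finset.univ.filter fun j : Fin n => ∑ i ∈ Finset.Iic j, a i < 0 with hT
  constructor
  · intro hk
    have hsub : Finset.Iic k ⊆ T := by
      intro j hj
      simp only [hT, Finset.mem_filter, Finset.mem_univ, true_and]
      exact aux_down hmono (Finset.mem_Iic.1 hj) hk
    have := Finset.card_le_card hsub
    rw [Fin.card_Iic] at this
    omega
  · intro hk
    by_contra hneg
    have hsub : T ⊆ Finset.Iio k := by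
      intro j hj
      simp only [hT, Finset.mem_filter, Finset.mem_univ, true_and] at hj
      rw [Finset.mem_Iio]
      by_contra hjk
      exact hneg (aux_down hmono (le_of_not_gt hjk) hj)
    have := Finset.card_le_card hsub
    rw [Fin.card_Iio] at this
    omega

open scoped Classical in
/-- The ES backtest statistic `G_n` equals the smallest confidence level `α ∈ (0,1)`
at which the empirical Expected Shortfall of the sample is nonpositive (with `inf ∅ := 1`). -/
theorem esBacktest_eq_inf (n : ℕ) (hn : 1 ≤ n) (y : Fin n → ℝ)
    (hy : Function.Injective y) :
    (1 / (n : ℝ)) *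
        ∑ k : Fin n,
          (if (∑ i : Fin n, if i ≤ k then orderStat y i else 0) < 0 then (1 : ℝ) else 0) =
      if {α : ℝ | α ∈ Set.Ioo (0 : ℝ) 1 ∧ empES α y ≤ 0}.Nonempty then
        sInf {α : ℝ | α ∈ Set.Ioo (0 : ℝ) 1 ∧ empES α y ≤ 0}
      else 1 := by
  have hn0 : (0 : ℝ) < n := by exact_mod_cast hn
  set a := orderStat y with ha
  have hmono : Monotone a := Tuple.monotone_sort y
  have hsm : StrictMono a :=
    hmono.strictMono_of_injective (hy.comp (Tuple.sort y).injective)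
  have hIic : ∀ k : Fin n, (∑ i : Fin n, if i ≤ k then a i else 0) = ∑ i ∈ Finset.Iic k, a i := by
    intro k
    rw [← Finset.sum_filter]
    congr 1
    ext i
    simp
  set K := (Finset.univ.filter fun j : Fin n => ∑ i ∈ Finset.Iic j, a i < 0).card with hK
  have hKn : K ≤ n := by
    calc K ≤ Finset.univ.card := Finset.card_filter_le _ _
    _ = n := by simp
  have hLHS : ∑ k : Fin n,
      (if (∑ i : Fin n, if i ≤ k then a i else 0) < 0 then (1 : ℝ) else 0) = K := by
    simp_rw [hIic]
    rw [Finset.sum_boole, hK]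
  have hES : ∀ α : ℝ, α ∈ Set.Ioo (0 : ℝ) 1 → (empES α y ≤ 0 ↔ (K : ℝ) / n ≤ α) := by
    intro α hα
    obtain ⟨hα0, hα1⟩ := hα
    have hna : (0 : ℝ) ≤ (n : ℝ) * α := by positivity
    have hfl : ⌊(n : ℝ) * α⌋₊ < n := by
      rw [Nat.floor_lt hna]
      nlinarith
    set m := ⌊(n : ℝ) * α⌋₊ with hm
    set mf : Fin n := ⟨m, hfl⟩ with hmf
    have hos : orderStat y mf = a mf := rfl
    have hnum : (∑ i, if y i ≤ orderStat y mf then y i else 0) = ∑ i ∈ Finset.Iic mf, a i := by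
      rw [← Equiv.sum_comp (Tuple.sort y) (fun i => if y i ≤ orderStat y mf then y i else 0)]
      have h1 : ∀ j : Fin n,
          (if y (Tuple.sort y j) ≤ orderStat y mf then y (Tuple.sort y j) else 0) =
            if j ≤ mf then a j else 0 := by
        intro j
        rw [show y (Tuple.sort y j) = a j from rfl, hos]
        simp only [hsm.le_iff_le]
      simp_rw [h1]
      exact hIic mf
    have hden : (∑ i, if y i ≤ orderStat y mf then (1 : ℝ) else 0) = (m : ℝ) + 1 := by
      rw [← Equiv.sum_comp (Tuple.sort y) (fun i => if y i ≤ orderStat y mf then (1 : ℝ) else 0)]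
      have h1 : ∀ j : Fin n,
          (if y (Tuple.sort y j) ≤ orderStat y mf then (1 : ℝ) else 0) =
            if j ≤ mf then (1 : ℝ) else 0 := by
        intro j
        rw [show y (Tuple.sort y j) = a j from rfl, hos]
        simp only [hsm.le_iff_le]
      simp_rw [h1]
      rw [Finset.sum_boole]
      have h2 : Finset.univ.filter (fun j : Fin n => j ≤ mf) = Finset.Iic mf := by
        ext j; simp
      rw [h2, Fin.card_Iic]
      push_cast
      rfl
    unfold empES
    rw [dif_pos hfl, hnum, hden]
    have hden0 : (0 : ℝ) < (m : ℝ) + 1 := by positivity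
    rw [neg_nonpos, le_div_iff₀ hden0, zero_mul, ← not_lt, aux_card hmono mf, not_lt]
    have h3 : K ≤ (mf : ℕ) ↔ (K : ℝ) ≤ (n : ℝ) * α := Nat.le_floor_iff hna
    rw [← hK, h3, div_le_iff₀ hn0, mul_comm]
  set S := {α : ℝ | α ∈ Set.Ioo (0 : ℝ) 1 ∧ empES α y ≤ 0} with hS
  have hSdesc : S = {α : ℝ | α ∈ Set.Ioo (0 : ℝ) 1 ∧ (K : ℝ) / n ≤ α} := by
    ext α
    simp only [hS, Set.mem_setOf_eq]
    exact and_congr_right fun h => hES α h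
  have hKnn : (0 : ℝ) ≤ (K : ℝ) / n := by positivity
  by_cases hcase : K = n
  · have hempty : ¬S.Nonempty := by
      rintro ⟨α, hα⟩
      rw [hSdesc] at hα
      obtain ⟨⟨h0, h1⟩, h2⟩ := hα
      rw [hcase, div_self hn0.ne'] at h2
      linarith
    rw [if_neg hempty, hLHS, hcase]
    field_simp
  · have hKlt : K < n := lt_of_le_of_ne hKn hcase
    have hKr : (K : ℝ) / n < 1 := (div_lt_one hn0).2 (by exact_mod_cast hKlt)
    have hmem : ∀ β : ℝ, (K : ℝ) / n ≤ β → 0 < β → β < 1 → β ∈ S := by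
      intro β h1 h2 h3
      rw [hSdesc]
      exact ⟨⟨h2, h3⟩, h1⟩
    have hne : S.Nonempty :=
      ⟨((K : ℝ) / n + 1) / 2, hmem _ (by linarith) (by linarith) (by linarith)⟩
    rw [if_pos hne, hLHS]
    have hglb : IsGLB S ((K : ℝ) / n) := by
      constructor
      · intro α hα
        rw [hSdesc] at hα
        exact hα.2
      · intro b hb
        by_contra hbK
        push_neg at hbK
        set β := min ((b + (K : ℝ) / n) / 2) (((K : ℝ) / n + 1) / 2) with hβ
        have hβ1 : (K : ℝ) / n ≤ β := le_min (by linarith) (by linarith)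
        have hβ2 : 0 < β := lt_min (by linarith) (by linarith)
        have hβ3 : β < 1 := lt_of_le_of_lt (min_le_right _ _) (by linarith)
        have hβb : β < b := lt_of_le_of_lt (min_le_left _ _) (by linarith)
        have := hb (hmem β hβ1 hβ2 hβ3)
        linarith
    rw [hglb.csInf_eq hne]
    field_simp
end

section
/- For every integer n ≥ 2, every sample y = (y_1,…,y_n) ∈ ℝ^n, and every k with 1 ≤ k ≤ n−1, the nominal ES backtest statistic satisfies n·G_n = k if and only if y_(1)+…+y_(k) < 0 and y_(1)+…+y_(k+1) ≥ 0. -/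
open Finset

/-- For `1 ≤ k ≤ n-1`, the nominal ES backtest statistic equals `k` iff the sum of the `k`
smallest values is negative while the sum of the `k+1` smallest values is nonnegative. -/
theorem nominal_es_statistic_eq_iff (n : ℕ) (hn : 2 ≤ n) (y : Fin n → ℝ)
    (k : ℕ) (hk1 : 1 ≤ k) (hk2 : k ≤ n - 1) :
    (∑ m : Fin n,
        if (∑ i : Fin n, if i ≤ m then orderStat y i else 0) < 0 then 1 else 0) = k ↔
      (∑ i : Fin n, if (i : ℕ) < k then orderStat y i else 0) < 0 ∧
        0 ≤ ∑ i : Fin n, if (i : ℕ) < k + 1 then orderStat y i else 0 := by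
  have hkn : k < n := by omega
  set a : Fin n → ℝ := orderStat y with ha
  have hmono : Monotone a := Tuple.monotone_sort y
  set s : Fin n → ℝ := fun m => ∑ i, if i ≤ m then a i else 0 with hs
  -- upward closedness of nonnegativity of partial sums
  have key : ∀ m m' : Fin n, m ≤ m' → 0 ≤ s m → 0 ≤ s m' := by
    intro m m' hmm' h0
    have hpos : ∀ j : Fin n, m < j → 0 ≤ a j := by
      intro j hj
      by_contra hneg
      push_neg at hneg
      have hlt : s m < 0 := by
        have := Finset.sum_lt_sum (s := Finset.univ)
          (f := fun i => if i ≤ m then a i else 0) (g := fun _ => (0:ℝ))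
          (fun i _ => by
            by_cases h : i ≤ m
            · simp only [h, if_true]
              exact (hmono (le_of_lt (lt_of_le_of_lt h hj))).trans hneg.le
            · simp [h])
          ⟨m, Finset.mem_univ m, by
            simp only [le_refl, if_true]
            exact lt_of_le_of_lt (hmono hj.le) hneg⟩
        simpa using this
      linarith
    refine h0.trans (Finset.sum_le_sum fun i _ => ?_)
    by_cases h1 : i ≤ m
    · simp [h1, h1.trans hmm']
    · by_cases h2 : i ≤ m'
      · simp only [h1, if_false, h2, if_true]
        exact hpos i (lt_of_not_ge h1)
      · simp [h1, h2]
  have hdown : ∀ m m' : Fin n, m ≤ m' → s m' < 0 → s m < 0 := by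
    intro m m' h hl
    by_contra h'
    push_neg at h'
    exact absurd (key m m' h h') (not_le.mpr hl)
  set c1 : Fin n := ⟨k - 1, by omega⟩ with hc1
  set c2 : Fin n := ⟨k, hkn⟩ with hc2
  have hsum : (∑ m : Fin n, if s m < 0 then 1 else 0)
      = (Finset.univ.filter (fun m => s m < 0)).card := by
    simp [Finset.sum_boole]
  have hs1 : s c1 = ∑ i : Fin n, if (i : ℕ) < k then a i else 0 := by
    apply Finset.sum_congr rfl
    intro i _
    have : i ≤ c1 ↔ (i : ℕ) < k := by
      rw [Fin.le_def]; simp [hc1]; omega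
    simp [this]
  have hs2 : s c2 = ∑ i : Fin n, if (i : ℕ) < k + 1 then a i else 0 := by
    apply Finset.sum_congr rfl
    intro i _
    have : i ≤ c2 ↔ (i : ℕ) < k + 1 := by
      rw [Fin.le_def]; simp [hc2]
    simp [this]
  rw [show (∑ m : Fin n,
        if (∑ i : Fin n, if i ≤ m then a i else 0) < 0 then 1 else 0)
      = ∑ m : Fin n, if s m < 0 then 1 else 0 from rfl, hsum, ← hs1, ← hs2]
  constructor
  · intro hcard
    constructor
    · by_contra h'
      push_neg at h'
      have hsub : Finset.univ.filter (fun m => s m < 0) ⊆ Finset.Iio c1 := by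
        intro m hm
        rw [Finset.mem_filter] at hm
        rw [Finset.mem_Iio]
        by_contra hle
        push_neg at hle
        exact absurd (key c1 m hle h') (not_le.mpr hm.2)
      have := Finset.card_le_card hsub
      rw [hcard, Fin.card_Iio] at this
      simp [hc1] at this
      omega
    · by_contra h'
      push_neg at h'
      have hsub : Finset.Iic c2 ⊆ Finset.univ.filter (fun m => s m < 0) := by
        intro m hm
        rw [Finset.mem_Iic] at hm
        rw [Finset.mem_filter]
        exact ⟨Finset.mem_univ m, hdown m c2 hm h'⟩
      have := Finset.card_le_card hsub
      rw [hcard, Fin.card_Iic] at this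
      simp [hc2] at this
  · rintro ⟨h1, h2⟩
    have heq : Finset.univ.filter (fun m => s m < 0) = Finset.Iic c1 := by
      ext m
      rw [Finset.mem_filter, Finset.mem_Iic]
      constructor
      · rintro ⟨-, hm⟩
        by_contra hle
        push_neg at hle
        have : c2 ≤ m := by
          rw [Fin.le_def]
          rw [Fin.lt_def] at hle
          simp [hc1] at hle
          simp [hc2]
          omega
        exact absurd (key c2 m this h2) (not_le.mpr hm)
      · intro hm
        exact ⟨Finset.mem_univ m, hdown m c1 hm h1⟩
    rw [heq, Fin.card_Iic]
    simp [hc1]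
    omega
end
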